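/- Let each ℓᵢ : ℝᵈ → ℝ be L-smooth and satisfy ℓᵢ(ω) ≥ ℓᵢ(x) + ⟨ω−x, ∇ℓᵢ(x)⟩ + (μᵢ/2)‖x−ω‖² for all x and for ω ∈ Θ* with ℓᵢ(ω) − inf ℓᵢ ≤ ε, where 0 ≤ μᵢ ≤ L and ε ≥ 0. Let σ be a permutation of {1,...,n}, η = 1/L, θₖ₊₁ = θₖ − η∇ℓ_{σ(k)}(θₖ). Then ‖θₙ − ω‖² ≤ ∏_{i=1}^n (1 − μᵢ/L) · ‖θ₀ − ω‖² + 2ηε ∑_{k=0}^{n−1} ∏_{s=k+1}^{n−1} (1 − μ_{σ(s)}/L). -/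

import Mathlib

/-!
For a single step `x⁺ = x - g / L` expand `‖x⁺ - ω‖²`. The cross term is bounded by the
convexity-type inequality towards `ω`, and the term `‖g‖² / L²` by the descent lemma,
`‖g‖² ≤ 2L (ℓ(x) - ℓ*)`. The values `ℓ(x)` cancel, leaving
`‖x⁺ - ω‖² ≤ (1 - μ/L) ‖x - ω‖² + (2/L)(ℓ(ω) - ℓ*)`, and `ℓ(ω) - ℓ* ≤ ε`.
Unrolling this affine recursion over the epoch produces the products of contraction factors.
-/

open RealInnerProductSpace

section GradientStep

variable {E : Type*} [NormedAddCommGroup E] [InnerProductSpace ℝ E]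

theorem norm_sub_smul_sub_sq (x ω g : E) (η : ℝ) :
    ‖x - η • g - ω‖ ^ 2 = ‖x - ω‖ ^ 2 - 2 * η * ⟪x - ω, g⟫ + η ^ 2 * ‖g‖ ^ 2 := by
  rw [sub_right_comm, norm_sub_sq_real, real_inner_smul_right, norm_smul, mul_pow,
    Real.norm_eq_abs, sq_abs]
  ring

theorem norm_sq_le_of_quadratic_upper_bound {f : E → ℝ} {x g : E} {L fstar : ℝ} (hL : 0 < L)
    (hsmooth : ∀ y, f y ≤ f x + ⟪y - x, g⟫ + (L / 2) * ‖y - x‖ ^ 2)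
    (hlb : ∀ y, fstar ≤ f y) :
    ‖g‖ ^ 2 ≤ 2 * L * (f x - fstar) := by
  have hdescent := hsmooth (x - (1 / L) • g)
  rw [sub_sub_cancel_left, inner_neg_left, real_inner_smul_left, real_inner_self_eq_norm_sq,
    norm_neg, norm_smul, mul_pow, Real.norm_eq_abs, sq_abs] at hdescent
  have hmodel : (L / 2) * ((1 / L) ^ 2 * ‖g‖ ^ 2) = 1 / L * ‖g‖ ^ 2 / 2 := by field_simp
  have hsq : 1 / L * ‖g‖ ^ 2 ≤ 2 * (f x - fstar) := by
    linarith [hlb (x - (1 / L) • g)]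
  calc ‖g‖ ^ 2 = L * (1 / L * ‖g‖ ^ 2) := by field_simp
    _ ≤ L * (2 * (f x - fstar)) := by gcongr
    _ = 2 * L * (f x - fstar) := by ring

theorem norm_gradient_step_sub_sq_le {f : E → ℝ} {x ω g : E} {L μ ε fstar : ℝ} (hL : 0 < L)
    (hsmooth : ∀ y, f y ≤ f x + ⟪y - x, g⟫ + (L / 2) * ‖y - x‖ ^ 2)
    (hlb : ∀ y, fstar ≤ f y) (hinc : f ω - fstar ≤ ε)
    (hconv : f ω ≥ f x + ⟪ω - x, g⟫ + (μ / 2) * ‖x - ω‖ ^ 2) :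
    ‖x - (1 / L) • g - ω‖ ^ 2 ≤ (1 - μ / L) * ‖x - ω‖ ^ 2 + 2 * (1 / L) * ε := by
  have hgrad : (1 / L) ^ 2 * ‖g‖ ^ 2 ≤ 2 * (1 / L) * (f x - fstar) := by
    calc (1 / L) ^ 2 * ‖g‖ ^ 2
        ≤ (1 / L) ^ 2 * (2 * L * (f x - fstar)) := by
          gcongr; exact norm_sq_le_of_quadratic_upper_bound hL hsmooth hlb
      _ = 2 * (1 / L) * (f x - fstar) := by field_simp
  have hinner : ⟪ω - x, g⟫ = -⟪x - ω, g⟫ := by rw [← inner_neg_left, neg_sub]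
  rw [hinner] at hconv
  have hη : 0 ≤ 1 / L := by positivity
  rw [norm_sub_smul_sub_sq, div_eq_mul_one_div μ, mul_comm μ]
  linarith [mul_le_mul_of_nonneg_left hconv hη, mul_le_mul_of_nonneg_left hinc hη]

end GradientStep

theorem le_prod_mul_add_sum_prod_of_le_mul_add {R : Type*} [CommSemiring R] [PartialOrder R]
    [IsOrderedRing R] {n : ℕ} {a : ℕ → R} {c : Fin n → R} {b : R} (hc : ∀ k, 0 ≤ c k)
    (ha : ∀ k : Fin n, a (k.val + 1) ≤ c k * a k.val + b) :
    a n ≤ (∏ k, c k) * a 0 + b * ∑ k ∈ Finset.range n,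
      ∏ s ∈ Finset.univ.filter (fun s : Fin n => k < s.val), c s := by
  induction n with
  | zero => simp
  | succ n ih =>
    have ih' := ih (fun k => hc k.castSucc) (fun k => ha k.castSucc)
    have htail : ∀ k < n, ∏ s ∈ Finset.univ.filter (fun s : Fin (n + 1) => k < s.val), c s =
        (∏ s ∈ Finset.univ.filter (fun s : Fin n => k < s.val), c s.castSucc) * c (Fin.last n) := by
      intro k hk
      rw [Finset.prod_filter, Finset.prod_filter, Fin.prod_univ_castSucc]
      simp [hk]
    have hlast : ∏ s ∈ Finset.univ.filter (fun s : Fin (n + 1) => n < s.val), c s = 1 := by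
      refine Finset.prod_eq_one fun s hs => absurd (Finset.mem_filter.1 hs).2 ?_
      omega
    rw [Finset.sum_range_succ, hlast, Finset.sum_congr rfl fun k hk => htail k
      (Finset.mem_range.1 hk), ← Finset.sum_mul, Fin.prod_univ_castSucc]
    calc a (n + 1) ≤ c (Fin.last n) * a n + b := ha (Fin.last n)
      _ ≤ c (Fin.last n) * ((∏ k : Fin n, c k.castSucc) * a 0 + b * ∑ k ∈ Finset.range n,
            ∏ s ∈ Finset.univ.filter (fun s : Fin n => k < s.val), c s.castSucc) + b := by
          gcongr; exact hc _
      _ = _ := by ring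

theorem stmt_13_general (d n : ℕ) (ℓ : Fin n → EuclideanSpace ℝ (Fin d) → ℝ)
    (L ε : ℝ) (hL : 0 < L)
    (μ : Fin n → ℝ) (hμL : ∀ i, μ i ≤ L)
    (hsmooth : ∀ i x y, ℓ i x ≤ ℓ i y + ⟪x - y, gradient (ℓ i) y⟫ + (L / 2) * ‖x - y‖ ^ 2)
    (ω : EuclideanSpace ℝ (Fin d)) (ℓstar : Fin n → ℝ)
    (hlb : ∀ i x, ℓstar i ≤ ℓ i x)
    (hinc : ∀ i, ℓ i ω - ℓstar i ≤ ε)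
    (hconv : ∀ i x, ℓ i ω ≥ ℓ i x + ⟪ω - x, gradient (ℓ i) x⟫ + (μ i / 2) * ‖x - ω‖ ^ 2)
    (σ : Equiv.Perm (Fin n)) (η : ℝ) (hη : η = 1 / L)
    (θ : ℕ → EuclideanSpace ℝ (Fin d))
    (hrec : ∀ k : Fin n, θ (k.val + 1) = θ k.val - η • gradient (ℓ (σ k)) (θ k.val)) :
    ‖θ n - ω‖ ^ 2 ≤ (∏ i, (1 - μ i / L)) * ‖θ 0 - ω‖ ^ 2 +
      2 * η * ε * ∑ k ∈ Finset.range n,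
        ∏ s ∈ Finset.univ.filter (fun s : Fin n => k < s.val), (1 - μ (σ s) / L) := by
  subst hη
  have hcontr : ∀ i, 0 ≤ 1 - μ i / L := fun i => sub_nonneg.2 ((div_le_one hL).2 (hμL i))
  have hstep (k : Fin n) : ‖θ (k.val + 1) - ω‖ ^ 2 ≤
      (1 - μ (σ k) / L) * ‖θ k.val - ω‖ ^ 2 + 2 * (1 / L) * ε := by
    rw [hrec k]
    exact norm_gradient_step_sub_sq_le hL (hsmooth (σ k) · _) (hlb (σ k)) (hinc (σ k))
      (hconv (σ k) _)
  rw [← Equiv.prod_comp σ (fun i => 1 - μ i / L)]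
  exact le_prod_mul_add_sum_prod_of_le_mul_add (a := fun k => ‖θ k - ω‖ ^ 2)
    (fun k => hcontr (σ k)) hstep

theorem stmt_13 (d n : ℕ) (ℓ : Fin n → EuclideanSpace ℝ (Fin d) → ℝ)
    (L ε : ℝ) (hL : 0 < L) (hε : 0 ≤ ε)
    (μ : Fin n → ℝ) (hμ0 : ∀ i, 0 ≤ μ i) (hμL : ∀ i, μ i ≤ L)
    (hdiff : ∀ i, Differentiable ℝ (ℓ i))
    (hsmooth : ∀ i x y, ℓ i x ≤ ℓ i y + ⟪x - y, gradient (ℓ i) y⟫ + (L / 2) * ‖x - y‖ ^ 2)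
    (ω : EuclideanSpace ℝ (Fin d)) (ℓstar : Fin n → ℝ)
    (hlb : ∀ i x, ℓstar i ≤ ℓ i x)
    (hinc : ∀ i, ℓ i ω - ℓstar i ≤ ε)
    (hconv : ∀ i x, ℓ i ω ≥ ℓ i x + ⟪ω - x, gradient (ℓ i) x⟫ + (μ i / 2) * ‖x - ω‖ ^ 2)
    (σ : Equiv.Perm (Fin n)) (η : ℝ) (hη : η = 1 / L)
    (θ : ℕ → EuclideanSpace ℝ (Fin d))
    (hrec : ∀ k : Fin n, θ (k.val + 1) = θ k.val - η • gradient (ℓ (σ k)) (θ k.val)) :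
    ‖θ n - ω‖ ^ 2 ≤ (∏ i, (1 - μ i / L)) * ‖θ 0 - ω‖ ^ 2 +
      2 * η * ε * ∑ k ∈ Finset.range n,
        ∏ s ∈ Finset.univ.filter (fun s : Fin n => k < s.val), (1 - μ (σ s) / L) :=
  stmt_13_general d n ℓ L ε hL μ hμL hsmooth ω ℓstar hlb hinc hconv σ η hη θ hrec
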